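/- arXiv:0908.3121 — 2 statements merged into one kernel-verified Lean document; each statement's English description precedes it below -/
import Mathlib

section
/- Let γ ∈ ℝ, σ ≥ 0, and let ρ : ℝ → [0,∞) be a continuous integrable function with ∫_ℝ x²ρ(x)dx < ∞ such that the Fourier transform t ↦ ∫_ℝ e^{itx} x²ρ(x)dx is integrable over ℝ. Define φ(t) = exp(iγt − σ²t²/2 + ∫_ℝ (e^{itx} − 1)ρ(x)dx). Then for every x ≠ 0, ρ(x) = (1/(2πx²)) ∫_ℝ e^{−itx} ( ((φ′(t))² − φ″(t)φ(t)) / (φ(t))² − σ² ) dt. -/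
/-
Writing φ = exp ψ, the bracket ((φ′)² − φ″φ)/φ² equals −ψ″, and differentiating the Lévy
exponent ψ twice under the integral gives −ψ″(t) − σ² = ∫ e^{itx} x²ρ(x) dx. The claim is then
Fourier inversion for the integrable continuous function x²ρ(x). Both the differentiation under
the integral and the inversion reduce to the corresponding facts for `𝓕` via t = −2πξ.
-/

open MeasureTheory Complex FourierTransform

noncomputable def levyExponent (γ σ : ℝ) (g : ℝ → ℂ) (t : ℝ) : ℂ :=
  I * γ * t - σ ^ 2 * t ^ 2 / 2 + ∫ x : ℝ, (exp (I * t * x) - 1) * g x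

theorem MeasureTheory.Integrable.smul_of_sq_smul {E : Type*} [NormedAddCommGroup E]
    [NormedSpace ℝ E] {g : ℝ → E} (hg : Integrable g) (hg₂ : Integrable fun x : ℝ => x ^ 2 • g x) :
    Integrable fun x : ℝ => x • g x := by
  refine (hg.norm.add hg₂.norm).mono'
    (continuous_id.aestronglyMeasurable.smul hg.aestronglyMeasurable) (ae_of_all _ fun x => ?_)
  have hx : |x| ≤ 1 + x ^ 2 := by nlinarith [abs_nonneg x, sq_abs x]
  simp only [norm_smul, norm_pow, Real.norm_eq_abs, sq_abs, Pi.add_apply]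
  nlinarith [norm_nonneg (g x)]

theorem integrable_exp_mul {g : ℝ → ℂ} (hg : Integrable g) (t : ℝ) :
    Integrable fun x : ℝ => exp (I * t * x) * g x :=
  hg.bdd_mul (c := 1) (by fun_prop) (ae_of_all _ fun x => by
    rw [show I * t * x = ((t * x : ℝ) : ℂ) * I by push_cast; ring, norm_exp_ofReal_mul_I])

theorem integral_exp_mul_eq_fourier (g : ℝ → ℂ) (t : ℝ) :
    ∫ x : ℝ, exp (I * t * x) * g x = 𝓕 g (-t / (2 * Real.pi)) := by
  rw [Real.fourier_real_eq_integral_exp_smul]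
  congr 1 with x
  rw [smul_eq_mul]
  congr 2
  push_cast
  field_simp

theorem hasDerivAt_integral_exp_mul {g : ℝ → ℂ} (hg : Integrable g)
    (hg₁ : Integrable fun x : ℝ => x • g x) (t : ℝ) :
    HasDerivAt (fun t : ℝ => ∫ x : ℝ, exp (I * t * x) * g x)
      (∫ x : ℝ, exp (I * t * x) * (I * x * g x)) t := by
  simp_rw [integral_exp_mul_eq_fourier]
  have hlin : HasDerivAt (fun t : ℝ => -t / (2 * Real.pi)) (-1 / (2 * Real.pi)) t :=
    (hasDerivAt_neg t).div_const _
  refine ((Real.hasDerivAt_fourier hg hg₁ _).scomp t hlin).congr_deriv ?_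
  simp only [Real.fourier_real_eq, ← integral_smul]
  congr 1 with x
  simp only [Circle.smul_def, smul_eq_mul, real_smul]
  push_cast
  field_simp

theorem integral_exp_neg_mul_integral_exp_mul {g : ℝ → ℂ} (hg : Integrable g) {x : ℝ}
    (hgx : ContinuousAt g x) (hT : Integrable fun t : ℝ => ∫ y : ℝ, exp (I * t * y) * g y) :
    ∫ t : ℝ, exp (-(I * t * x)) * ∫ y : ℝ, exp (I * t * y) * g y = 2 * Real.pi * g x := by
  have hπ : (0 : ℝ) < 2 * Real.pi := by positivity
  have hFg : Integrable (𝓕 g) := by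
    convert hT.comp_mul_left' (neg_ne_zero.mpr hπ.ne') using 2 with ξ
    rw [integral_exp_mul_eq_fourier]
    field_simp
  have hscale := Measure.integral_comp_mul_left
    (fun t : ℝ => exp (-(I * t * x)) * 𝓕 g (-t / (2 * Real.pi))) (-(2 * Real.pi))
  rw [abs_inv, abs_neg, abs_of_pos hπ, eq_inv_smul_iff₀ hπ.ne'] at hscale
  simp_rw [integral_exp_mul_eq_fourier]
  rw [← hscale, ← hg.fourierInv_fourier_eq hFg hgx, Real.fourierInv_eq', real_smul]
  push_cast
  congr 2 with v
  rw [smul_eq_mul, Real.inner_apply, show -(-(2 * Real.pi) * v) / (2 * Real.pi) = v by field_simp]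
  push_cast
  ring_nf

theorem hasDerivAt_ofReal (t : ℝ) : HasDerivAt (fun t : ℝ => (t : ℂ)) 1 t := by
  simpa using (hasDerivAt_id t).ofReal_comp

section LevyExponent

variable (γ σ : ℝ) {g : ℝ → ℂ}

theorem hasDerivAt_levyExponent (hg : Integrable g) (hg₂ : Integrable fun x : ℝ => x ^ 2 • g x)
    (t : ℝ) :
    HasDerivAt (levyExponent γ σ g)
      (I * γ - σ ^ 2 * t + ∫ x : ℝ, exp (I * t * x) * (I * x * g x)) t := by
  have hjump : (fun t : ℝ => ∫ x : ℝ, (exp (I * t * x) - 1) * g x)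
      = fun t : ℝ => (∫ x : ℝ, exp (I * t * x) * g x) - ∫ x : ℝ, g x := by
    ext s
    simp only [sub_mul, one_mul]
    exact integral_sub (integrable_exp_mul hg s) hg
  have hjump' := (hasDerivAt_integral_exp_mul hg (hg.smul_of_sq_smul hg₂) t).sub_const (∫ x, g x)
  rw [← hjump] at hjump'
  have hsq := (((hasDerivAt_ofReal t).pow 2).const_mul ((σ : ℂ) ^ 2)).div_const 2
  refine (((hasDerivAt_ofReal t).const_mul (I * γ)).sub hsq).add hjump' |>.congr_deriv ?_
  simp only [mul_one, Nat.cast_ofNat, Nat.add_one_sub_one, pow_one]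
  ring

theorem hasDerivAt_deriv_levyExponent (hg : Integrable g)
    (hg₂ : Integrable fun x : ℝ => x ^ 2 • g x) (t : ℝ) :
    HasDerivAt (fun t : ℝ => I * γ - σ ^ 2 * t + ∫ x : ℝ, exp (I * t * x) * (I * x * g x))
      (-σ ^ 2 - ∫ x : ℝ, exp (I * t * x) * (x ^ 2 * g x)) t := by
  have hIg : Integrable fun x : ℝ => I * x * g x := by
    simpa only [real_smul, mul_assoc] using (hg.smul_of_sq_smul hg₂).const_mul I
  have hIg₁ : Integrable fun x : ℝ => x • (I * x * g x) := by
    convert hg₂.const_mul I using 2 with x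
    simp only [real_smul, ofReal_pow]
    ring
  have hI_sq : ∫ x : ℝ, exp (I * t * x) * (I * x * (I * x * g x))
      = -∫ x : ℝ, exp (I * t * x) * (x ^ 2 * g x) := by
    rw [← integral_neg]
    congr 1 with x
    linear_combination (exp (I * t * x) * x ^ 2 * g x) * I_mul_I
  refine (((hasDerivAt_const t (I * γ)).sub ((hasDerivAt_ofReal t).const_mul ((σ : ℂ) ^ 2))).add
    (hasDerivAt_integral_exp_mul hIg hIg₁ t)).congr_deriv ?_
  rw [hI_sq]
  ring

end LevyExponent

theorem sq_deriv_sub_deriv_deriv_mul_div_sq_of_eq_exp {ψ ψ' ψ'' φ : ℝ → ℂ}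
    (hψ : ∀ t, HasDerivAt ψ (ψ' t) t) (hψ' : ∀ t, HasDerivAt ψ' (ψ'' t) t)
    (hφ : ∀ t, φ t = exp (ψ t)) (t : ℝ) :
    ((deriv φ t) ^ 2 - deriv (deriv φ) t * φ t) / φ t ^ 2 = -ψ'' t := by
  have hφ_eq : φ = fun t => exp (ψ t) := funext hφ
  have hφ' : deriv φ = fun t => φ t * ψ' t := by
    ext s; rw [hφ_eq]; exact (hψ s).cexp.deriv
  have hφ'' : deriv (deriv φ) t = φ t * ψ' t * ψ' t + φ t * ψ'' t := by
    rw [hφ', hφ_eq]; exact ((hψ t).cexp.mul (hψ' t)).deriv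
  have hφ_ne : φ t ≠ 0 := by rw [hφ]; exact exp_ne_zero _
  rw [hφ'', hφ']
  field_simp
  ring

theorem stmt2_general (γ σ : ℝ) (ρ : ℝ → ℝ)
    (hρ_cont : Continuous ρ)
    (hρ_int : Integrable ρ)
    (hρ_mom2 : Integrable (fun x : ℝ => x ^ 2 * ρ x))
    (hFT_int : Integrable
      (fun t : ℝ => ∫ x : ℝ, Complex.exp (Complex.I * t * x) * x ^ 2 * ρ x))
    (φ : ℝ → ℂ)
    (hφ : ∀ t : ℝ, φ t = Complex.exp (Complex.I * γ * t - σ ^ 2 * t ^ 2 / 2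
      + ∫ x : ℝ, (Complex.exp (Complex.I * t * x) - 1) * ρ x)) :
    ∀ x : ℝ, x ≠ 0 →
      (ρ x : ℂ) = (1 / (2 * Real.pi * x ^ 2)) *
        ∫ t : ℝ, Complex.exp (-(Complex.I * t * x)) *
          (((deriv φ t) ^ 2 - deriv (deriv φ) t * φ t) / (φ t) ^ 2 - σ ^ 2) := by
  intro x hx
  have hρ : Integrable fun y : ℝ => (ρ y : ℂ) := hρ_int.ofReal
  have hρ₂ : Integrable fun y : ℝ => y ^ 2 • (ρ y : ℂ) := by
    simpa [real_smul] using hρ_mom2.ofReal (𝕜 := ℂ)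
  have hbracket (t : ℝ) :
      ((deriv φ t) ^ 2 - deriv (deriv φ) t * φ t) / (φ t) ^ 2 - σ ^ 2
        = ∫ y : ℝ, exp (I * t * y) * (y ^ 2 * ρ y) := by
    rw [sq_deriv_sub_deriv_deriv_mul_div_sq_of_eq_exp (hasDerivAt_levyExponent γ σ hρ hρ₂)
      (hasDerivAt_deriv_levyExponent γ σ hρ hρ₂) hφ t]
    ring
  simp_rw [hbracket]
  rw [integral_exp_neg_mul_integral_exp_mul (by simpa only [real_smul, ofReal_pow] using hρ₂)
    (by fun_prop)]
  · have hx' : (x : ℂ) ≠ 0 := ofReal_ne_zero.mpr hx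
    field_simp
  · convert hFT_int using 2 with t
    congr 1 with y
    ring

/-- Inversion formula for the Lévy density: if `ρ` is a continuous, integrable,
nonnegative Lévy density with finite second moment whose (second-moment) Fourier transform
`t ↦ ∫ e^{itx} x²ρ(x) dx` is integrable, then for every `x ≠ 0`,
`ρ(x) = (1/(2πx²)) ∫ e^{−itx}(((φ′(t))² − φ″(t)φ(t))/(φ(t))² − σ²) dt`, where `φ` is the
characteristic function of the unit-time increment. -/
theorem stmt2 (γ σ : ℝ) (hσ : 0 ≤ σ) (ρ : ℝ → ℝ)
    (hρ_nonneg : ∀ x : ℝ, 0 ≤ ρ x)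
    (hρ_cont : Continuous ρ)
    (hρ_int : Integrable ρ)
    (hρ_mom2 : Integrable (fun x : ℝ => x ^ 2 * ρ x))
    (hFT_int : Integrable
      (fun t : ℝ => ∫ x : ℝ, Complex.exp (Complex.I * t * x) * x ^ 2 * ρ x))
    (φ : ℝ → ℂ)
    (hφ : ∀ t : ℝ, φ t = Complex.exp (Complex.I * γ * t - σ ^ 2 * t ^ 2 / 2
      + ∫ x : ℝ, (Complex.exp (Complex.I * t * x) - 1) * ρ x)) :
    ∀ x : ℝ, x ≠ 0 →
      (ρ x : ℂ) = (1 / (2 * Real.pi * x ^ 2)) *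
        ∫ t : ℝ, Complex.exp (-(Complex.I * t * x)) *
          (((deriv φ t) ^ 2 - deriv (deriv φ) t * φ t) / (φ t) ^ 2 - σ ^ 2) :=
  stmt2_general γ σ ρ hρ_cont hρ_int hρ_mom2 hFT_int φ hφ
end

section
/- Let σ > 0, 0 < δ ≤ 1, and let ψ : ℝ → ℂ be a measurable square-integrable function that vanishes on the interval (−1, 1). Then ∫_ℝ |ψ(δt)|² e^{−σ²t²} dt ≤ δ^{−1} e^{−σ²/δ²} ∫_ℝ |ψ(s)|² ds. -/
open MeasureTheory

/-- Gaussian-damping estimate. If `ψ : ℝ → ℂ` is measurable,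
square-integrable, and vanishes on `(−1, 1)`, then for `σ > 0` and `0 < δ ≤ 1`,
`∫ |ψ(δt)|² e^{−σ²t²} dt ≤ δ⁻¹ e^{−σ²/δ²} ∫ |ψ(s)|² ds`. -/
theorem stmt13 (σ δ : ℝ) (hσ : 0 < σ) (hδ0 : 0 < δ) (hδ1 : δ ≤ 1)
    (ψ : ℝ → ℂ) (hψ_meas : Measurable ψ)
    (hψ_L2 : Integrable (fun s : ℝ => ‖ψ s‖ ^ 2))
    (hψ_vanish : ∀ s ∈ Set.Ioo (-1 : ℝ) 1, ψ s = 0) :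
    (∫ t : ℝ, ‖ψ (δ * t)‖ ^ 2 * Real.exp (-(σ ^ 2) * t ^ 2))
      ≤ δ⁻¹ * Real.exp (-(σ ^ 2) / δ ^ 2) * ∫ s : ℝ, ‖ψ s‖ ^ 2 := by
  have hint : Integrable (fun t : ℝ => ‖ψ (δ * t)‖ ^ 2) := by
    exact (integrable_comp_mul_left_iff (fun s : ℝ => ‖ψ s‖ ^ 2) (ne_of_gt hδ0)).mpr hψ_L2
  have hcov : (∫ t : ℝ, ‖ψ (δ * t)‖ ^ 2) = δ⁻¹ * ∫ s : ℝ, ‖ψ s‖ ^ 2 := by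
    rw [Measure.integral_comp_mul_left (fun s : ℝ => ‖ψ s‖ ^ 2) δ]
    rw [abs_inv, abs_of_pos hδ0, smul_eq_mul]
  have hpt : ∀ t : ℝ, ‖ψ (δ * t)‖ ^ 2 * Real.exp (-(σ ^ 2) * t ^ 2)
      ≤ Real.exp (-(σ ^ 2) / δ ^ 2) * ‖ψ (δ * t)‖ ^ 2 := by
    intro t
    by_cases h : ψ (δ * t) = 0
    · simp [h]
    · have ht : (1 : ℝ) ≤ |δ * t| := by
        by_contra hc
        push_neg at hc
        exact h (hψ_vanish _ ⟨neg_lt_of_abs_lt hc, lt_of_abs_lt hc⟩)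
      have ht2 : 1 / δ ^ 2 ≤ t ^ 2 := by
        rw [div_le_iff₀ (by positivity)]
        calc (1 : ℝ) ≤ |δ * t| ^ 2 := by
              nlinarith [abs_nonneg (δ * t)]
          _ = t ^ 2 * δ ^ 2 := by rw [sq_abs]; ring
      have hexp : Real.exp (-(σ ^ 2) * t ^ 2) ≤ Real.exp (-(σ ^ 2) / δ ^ 2) := by
        apply Real.exp_le_exp.mpr
        have : -(σ ^ 2) / δ ^ 2 = -(σ ^ 2) * (1 / δ ^ 2) := by ring
        rw [this]
        nlinarith [sq_nonneg σ]
      calc ‖ψ (δ * t)‖ ^ 2 * Real.exp (-(σ ^ 2) * t ^ 2)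
          ≤ ‖ψ (δ * t)‖ ^ 2 * Real.exp (-(σ ^ 2) / δ ^ 2) := by
            apply mul_le_mul_of_nonneg_left hexp (by positivity)
        _ = Real.exp (-(σ ^ 2) / δ ^ 2) * ‖ψ (δ * t)‖ ^ 2 := by ring
  have h1 : (∫ t : ℝ, ‖ψ (δ * t)‖ ^ 2 * Real.exp (-(σ ^ 2) * t ^ 2))
      ≤ ∫ t : ℝ, Real.exp (-(σ ^ 2) / δ ^ 2) * ‖ψ (δ * t)‖ ^ 2 := by
    apply integral_mono_of_nonneg
    · filter_upwards with t; positivity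
    · exact hint.const_mul _
    · filter_upwards with t using hpt t
  calc (∫ t : ℝ, ‖ψ (δ * t)‖ ^ 2 * Real.exp (-(σ ^ 2) * t ^ 2))
      ≤ ∫ t : ℝ, Real.exp (-(σ ^ 2) / δ ^ 2) * ‖ψ (δ * t)‖ ^ 2 := h1
    _ = Real.exp (-(σ ^ 2) / δ ^ 2) * ∫ t : ℝ, ‖ψ (δ * t)‖ ^ 2 := by
        rw [integral_const_mul]
    _ = δ⁻¹ * Real.exp (-(σ ^ 2) / δ ^ 2) * ∫ s : ℝ, ‖ψ s‖ ^ 2 := by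
        rw [hcov]; ring
end
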